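/- arXiv:1606.08481 — 2 statements merged into one kernel-verified Lean document; each statement's English description precedes it below -/
import Mathlib

section
/- Define K₁ : (ℝ² × ℝ/ℤ) \ {0} → ℝ by K₁(x) = lim_{N→∞} [ Σ_{n=-N}^{N} 1/(4π|x̃ + (0,0,n)|) - (log N)/(2π) ], where x̃ ∈ ℝ³ is any lift of x. Then this limit exists for every x ≠ 0 and is independent of the choice of lift x̃. -/
/-!
Compare with the sum at `x = 0`: the differences `‖x + n e₃‖⁻¹ - |n|⁻¹` are `O(n⁻²)`, hence
summable over `ℤ`, while `∑_{0 < |n| ≤ N} |n|⁻¹ = 2 H_N` and `H_N - log N` tends to the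
Euler–Mascheroni constant. Changing the lift by `m e₃` shifts the window of summation by `m`;
this moves only `|m|` terms near `±N`, and those tend to `0`.
-/

open Filter Topology

/-- The third standard basis vector of `ℝ³`. -/
noncomputable def e3 : EuclideanSpace ℝ (Fin 3) := EuclideanSpace.single 2 1

open Finset

section SymmetricSums

variable {G : Type*} [AddCommGroup G]

lemma sum_Icc_int_add_one_sub (f : ℤ → G) (N : ℕ) :
    ∑ n ∈ Icc (-(N : ℤ)) N, (f (n + 1) - f n) = f (N + 1) - f (-N) := by
  calc ∑ n ∈ Icc (-(N : ℤ)) N, (f (n + 1) - f n)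
      = -∑ n ∈ Ico (-(N : ℤ)) N, (f n - f (n + 1)) + (f (N + 1) - f N) := by
        rw [sum_Icc_eq_sum_Ico_add _ (by omega), ← sum_neg_distrib]
        simp only [neg_sub]
    _ = f (N + 1) - f (-N) := by
        rw [sum_Ico_int_sub]
        abel

variable [TopologicalSpace G] [IsTopologicalAddGroup G]

lemma tendsto_sum_Icc_int_add_one_sub {f : ℤ → G} (hf : Tendsto f cofinite (𝓝 0)) :
    Tendsto (fun N : ℕ ↦ ∑ n ∈ Icc (-(N : ℤ)) N, (f (n + 1) - f n)) atTop (𝓝 0) := by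
  have hcomp {e : ℕ → ℤ} (he : Function.Injective e) : Tendsto (fun N ↦ f (e N)) atTop (𝓝 0) :=
    hf.comp (Nat.cofinite_eq_atTop ▸ he.tendsto_cofinite)
  simpa only [sum_Icc_int_add_one_sub, sub_zero] using
    (hcomp (e := fun N ↦ (N : ℤ) + 1) (by intro a b h; simpa using h)).sub
      (hcomp (e := fun N ↦ -(N : ℤ)) (by intro a b h; simpa using h))

lemma tendsto_sum_Icc_int_comp_add_sub_sum {f : ℤ → G} (hf : Tendsto f cofinite (𝓝 0)) (m : ℤ) :
    Tendsto (fun N : ℕ ↦ ∑ n ∈ Icc (-(N : ℤ)) N, f (n + m) - ∑ n ∈ Icc (-(N : ℤ)) N, f n)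
      atTop (𝓝 0) := by
  have hstep (k : ℤ) :
      Tendsto (fun N : ℕ ↦ ∑ n ∈ Icc (-(N : ℤ)) N, (f (n + (k + 1)) - f (n + k))) atTop (𝓝 0) :=
    (tendsto_sum_Icc_int_add_one_sub (hf.comp (add_left_injective k).tendsto_cofinite)).congr
      fun N ↦ by simp only [Function.comp_apply, add_right_comm _ (1 : ℤ) k, add_assoc]
  induction m using Int.induction_on with
  | zero => simpa using tendsto_const_nhds
  | succ k ih =>
    refine (zero_add (0 : G) ▸ (hstep k).add ih).congr fun N ↦ ?_
    simp only [sum_sub_distrib]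
    abel
  | pred k ih =>
    refine (sub_zero (0 : G) ▸ ih.sub (hstep (-k - 1))).congr fun N ↦ ?_
    simp only [sum_sub_distrib, sub_add_cancel]
    abel

end SymmetricSums

-- The term `n = 0` vanishes since `0⁻¹ = 0`.
lemma sum_Icc_inv_abs_intCast (N : ℕ) :
    ∑ n ∈ Icc (-(N : ℤ)) N, |(n : ℝ)|⁻¹ = 2 * harmonic N := by
  have heven : Function.Even (fun n : ℤ ↦ |(n : ℝ)|⁻¹) := fun n ↦ by simp
  rw [sum_Icc_of_even_eq_range heven, sum_range_succ', harmonic]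
  push_cast
  simp only [abs_zero, inv_zero, add_zero, nsmul_eq_mul, Nat.cast_ofNat, sub_zero]
  congr 1
  exact sum_congr rfl fun i _ ↦ by rw [abs_of_pos (by positivity)]

lemma abs_inv_norm_add_sub_inv_norm_le {E : Type*} [SeminormedAddCommGroup E] {x v : E}
    (h : 2 * ‖x‖ ≤ ‖v‖) : |‖x + v‖⁻¹ - ‖v‖⁻¹| ≤ 2 * ‖x‖ / ‖v‖ ^ 2 := by
  rcases (norm_nonneg v).eq_or_lt with hv | hv
  · have hx : ‖x‖ = 0 := by linarith [norm_nonneg x]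
    have hxv : ‖x + v‖ = 0 := le_antisymm (by linarith [norm_add_le x v]) (norm_nonneg _)
    simp [hxv, ← hv]
  have hdist : |‖x + v‖ - ‖v‖| ≤ ‖x‖ := by
    simpa using abs_norm_sub_norm_le (x + v) v
  have hxv : ‖v‖ / 2 ≤ ‖x + v‖ := by linarith [(abs_le.mp hdist).1]
  have hxv0 : 0 < ‖x + v‖ := by linarith
  rw [inv_sub_inv hxv0.ne' hv.ne', abs_div, abs_sub_comm, abs_of_pos (mul_pos hxv0 hv),
    div_le_div_iff₀ (mul_pos hxv0 hv) (by positivity)]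
  nlinarith [mul_le_mul_of_nonneg_right hdist (sq_nonneg ‖v‖),
    mul_nonneg (norm_nonneg x) (mul_nonneg (by linarith : 0 ≤ 2 * ‖x + v‖ - ‖v‖) hv.le)]

section LatticeSum

variable {E : Type*} [NormedAddCommGroup E] [NormedSpace ℝ E] {v : E}

lemma tendsto_norm_intCast_smul_cofinite (hv : v ≠ 0) :
    Tendsto (fun n : ℤ ↦ ‖(n : ℝ) • v‖) cofinite atTop := by
  simp only [norm_smul]
  exact (tendsto_norm_cocompact_atTop.comp Int.tendsto_coe_cofinite).atTop_mul_const
    (norm_pos_iff.mpr hv)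

lemma tendsto_inv_norm_add_intCast_smul_cofinite (hv : v ≠ 0) (x : E) :
    Tendsto (fun n : ℤ ↦ ‖x + (n : ℝ) • v‖⁻¹) cofinite (𝓝 0) := by
  refine tendsto_inv_atTop_zero.comp (tendsto_atTop_mono (fun n ↦ ?_)
    (tendsto_atTop_add_const_right _ (-‖x‖) (tendsto_norm_intCast_smul_cofinite hv)))
  have := norm_sub_norm_le ((n : ℝ) • v) (-x)
  rw [norm_neg, sub_neg_eq_add, add_comm] at this
  linarith

lemma summable_inv_norm_add_intCast_smul_sub (hv : v ≠ 0) (x : E) :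
    Summable fun n : ℤ ↦ ‖x + (n : ℝ) • v‖⁻¹ - ‖(n : ℝ) • v‖⁻¹ := by
  have hsq : Summable fun n : ℤ ↦ 2 * ‖x‖ / ‖v‖ ^ 2 * (1 / (n : ℝ) ^ 2) :=
    (Real.summable_one_div_int_pow.mpr one_lt_two).mul_left _
  refine hsq.of_norm_bounded_eventually ?_
  filter_upwards [(tendsto_norm_intCast_smul_cofinite hv).eventually_ge_atTop (2 * ‖x‖)]
    with n hn
  calc ‖‖x + (n : ℝ) • v‖⁻¹ - ‖(n : ℝ) • v‖⁻¹‖ ≤ 2 * ‖x‖ / ‖(n : ℝ) • v‖ ^ 2 :=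
        abs_inv_norm_add_sub_inv_norm_le hn
    _ = 2 * ‖x‖ / ‖v‖ ^ 2 * (1 / (n : ℝ) ^ 2) := by
        rw [norm_smul, mul_pow, Real.norm_eq_abs, sq_abs]
        ring

/-- `K₁ = renormalizedLatticeSum e3 / (4π)`. The term `n = 0` of the series is `‖x‖⁻¹`,
since `‖0‖⁻¹ = 0`. -/
noncomputable def renormalizedLatticeSum (v x : E) : ℝ :=
  ∑' n : ℤ, (‖x + (n : ℝ) • v‖⁻¹ - ‖(n : ℝ) • v‖⁻¹) + 2 * Real.eulerMascheroniConstant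

open SummationFilter in
lemma tendsto_sum_Icc_inv_norm_sub_log (hv : ‖v‖ = 1) (x : E) :
    Tendsto (fun N : ℕ ↦ ∑ n ∈ Icc (-(N : ℤ)) N, ‖x + (n : ℝ) • v‖⁻¹ - 2 * Real.log N) atTop
      (𝓝 (renormalizedLatticeSum v x)) := by
  have hv0 : v ≠ 0 := norm_ne_zero_iff.mp (hv ▸ one_ne_zero)
  have hsum := hasSum_symmetricIcc_iff.mp
    ((summable_inv_norm_add_intCast_smul_sub hv0 x).hasSum.mono_left (symmetricIcc ℤ).le_atTop)
  refine (hsum.add (Real.tendsto_harmonic_sub_log.const_mul 2)).congr fun N ↦ ?_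
  simp only [sum_sub_distrib, norm_smul, hv, mul_one, Real.norm_eq_abs, sum_Icc_inv_abs_intCast]
  ring

lemma tendsto_sum_Icc_inv_norm_add_intCast_smul_sub_log (hv : ‖v‖ = 1) (x : E) (m : ℤ) :
    Tendsto (fun N : ℕ ↦
        ∑ n ∈ Icc (-(N : ℤ)) N, ‖(x + (m : ℝ) • v) + (n : ℝ) • v‖⁻¹ - 2 * Real.log N) atTop
      (𝓝 (renormalizedLatticeSum v x)) := by
  have hv0 : v ≠ 0 := norm_ne_zero_iff.mp (hv ▸ one_ne_zero)
  have hshift (n : ℤ) : (x + (m : ℝ) • v) + (n : ℝ) • v = x + ((n + m : ℤ) : ℝ) • v := by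
    push_cast
    module
  have hwindow := tendsto_sum_Icc_int_comp_add_sub_sum
    (tendsto_inv_norm_add_intCast_smul_cofinite hv0 x) m
  refine (add_zero (_ : ℝ) ▸ (tendsto_sum_Icc_inv_norm_sub_log hv x).add hwindow).congr
    fun N ↦ ?_
  simp only [hshift]
  ring

end LatticeSum

lemma norm_e3 : ‖e3‖ = 1 := by
  simp [e3, PiLp.norm_single]

theorem stmt_8_general (x : EuclideanSpace ℝ (Fin 3)) :
    ∃ L : ℝ,
      Tendsto (fun N : ℕ =>
        (∑ n ∈ Finset.Icc (-(N : ℤ)) (N : ℤ),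
          1 / (4 * Real.pi * ‖x + (n : ℝ) • e3‖)) - Real.log N / (2 * Real.pi))
        atTop (𝓝 L) ∧
      ∀ m : ℤ,
        Tendsto (fun N : ℕ =>
          (∑ n ∈ Finset.Icc (-(N : ℤ)) (N : ℤ),
            1 / (4 * Real.pi * ‖(x + (m : ℝ) • e3) + (n : ℝ) • e3‖))
            - Real.log N / (2 * Real.pi))
          atTop (𝓝 L) := by
  have hrescale (y : EuclideanSpace ℝ (Fin 3)) (N : ℕ) :
      (∑ n ∈ Icc (-(N : ℤ)) N, 1 / (4 * Real.pi * ‖y + (n : ℝ) • e3‖))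
          - Real.log N / (2 * Real.pi)
        = (∑ n ∈ Icc (-(N : ℤ)) N, ‖y + (n : ℝ) • e3‖⁻¹ - 2 * Real.log N) / (4 * Real.pi) := by
    simp only [one_div, mul_inv, ← mul_sum]
    field_simp
    ring
  refine ⟨renormalizedLatticeSum e3 x / (4 * Real.pi), ?_, fun m ↦ ?_⟩
  · simpa only [hrescale] using
      (tendsto_sum_Icc_inv_norm_sub_log norm_e3 x).div_const (4 * Real.pi)
  · simpa only [hrescale] using
      (tendsto_sum_Icc_inv_norm_add_intCast_smul_sub_log norm_e3 x m).div_const (4 * Real.pi)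

/-- The renormalized sum `K₁(x) = lim_{N→∞} [Σ_{n=-N}^N 1/(4π|x̃+(0,0,n)|) - log N/(2π)]`
defining the fundamental solution of the Laplacian on `ℝ² × ℝ/ℤ` exists at every nonzero
point and is independent of the choice of lift `x̃`. -/
theorem stmt_8 (x : EuclideanSpace ℝ (Fin 3))
    (hx : ∀ n : ℤ, x + (n : ℝ) • e3 ≠ 0) :
    ∃ L : ℝ,
      Tendsto (fun N : ℕ =>
        (∑ n ∈ Finset.Icc (-(N : ℤ)) (N : ℤ),
          1 / (4 * Real.pi * ‖x + (n : ℝ) • e3‖)) - Real.log N / (2 * Real.pi))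
        atTop (𝓝 L) ∧
      ∀ m : ℤ,
        Tendsto (fun N : ℕ =>
          (∑ n ∈ Finset.Icc (-(N : ℤ)) (N : ℤ),
            1 / (4 * Real.pi * ‖(x + (m : ℝ) • e3) + (n : ℝ) • e3‖))
            - Real.log N / (2 * Real.pi))
          atTop (𝓝 L) :=
  stmt_8_general x
end

section
/- With K₁ defined as the renormalized sum K₁(x) = lim_{N→∞} [ Σ_{n=-N}^N 1/(4π|x̃+(0,0,n)|) - (log N)/(2π) ] on (ℝ²×ℝ/ℤ)\{0}, the gradient of K₁ is given by the absolutely convergent series ∇K₁(x) = Σ_{n=-∞}^{∞} -(x̃+(0,0,n))/(4π|x̃+(0,0,n)|³). -/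
/-!
Subtracting the constant `‖n e₃‖⁻¹` from the `n`-th term makes the series converge absolutely,
since `|‖x + n e₃‖⁻¹ - ‖n e₃‖⁻¹| ≤ ‖x‖ ‖x + n e₃‖⁻¹ ‖n e₃‖⁻¹ = O(n⁻²)`. The subtracted constants
together with `log N / (2π)` form a sequence that does not depend on `x`, so near `x₀` the kernel
`K` is `(4π)⁻¹` times the renormalized series plus a constant. On a ball around `x₀` every
`‖y + n e₃‖` exceeds `‖x₀ + n e₃‖ / 2`, so the termwise gradients are dominated by the summable
`4 ‖x₀ + n e₃‖⁻²` and the series may be differentiated term by term.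
-/

open Filter Topology

open Asymptotics InnerProductSpace

section InvNorm

variable {E : Type*} [NormedAddCommGroup E] [InnerProductSpace ℝ E]

theorem hasFDerivAt_norm_of_ne_zero {x : E} (hx : x ≠ 0) :
    HasFDerivAt (‖·‖) (‖x‖⁻¹ • innerSL ℝ x) x := by
  have hsq := (hasStrictFDerivAt_norm_sq x).hasFDerivAt.sqrt (by positivity)
  simp only [Real.sqrt_sq (norm_nonneg _)] at hsq
  convert hsq using 1
  rw [← Nat.cast_smul_eq_nsmul ℝ, smul_smul]
  congr 1
  field_simp
  norm_num

theorem hasFDerivAt_inv_norm {x : E} (hx : x ≠ 0) :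
    HasFDerivAt (fun y : E => ‖y‖⁻¹) (innerSL ℝ (-((‖x‖ ^ 3)⁻¹ • x))) x := by
  have h := (hasDerivAt_inv (norm_ne_zero_iff.2 hx)).comp_hasFDerivAt x
    (hasFDerivAt_norm_of_ne_zero hx)
  refine h.congr_fderiv ?_
  rw [map_neg, map_smul, smul_smul, ← neg_smul]
  congr 1
  field_simp

theorem norm_inv_norm_pow_three_smul (w : E) : ‖(‖w‖ ^ 3)⁻¹ • w‖ = ‖w‖⁻¹ ^ 2 := by
  rcases eq_or_ne w 0 with rfl | hw
  · simp
  · rw [norm_smul, norm_inv, norm_pow, norm_norm]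
    field_simp [norm_ne_zero_iff.2 hw]

end InvNorm

section IntSmul

variable {E : Type*} [NormedAddCommGroup E] [InnerProductSpace ℝ E] {v : E}

theorem tendsto_abs_intCast_cofinite : Tendsto (fun n : ℤ => |(n : ℝ)|) cofinite atTop :=
  tendsto_norm_cocompact_atTop.comp Int.tendsto_coe_cofinite

theorem abs_mul_norm_sub_norm_le_norm_add_smul (x v : E) (t : ℝ) :
    |t| * ‖v‖ - ‖x‖ ≤ ‖x + t • v‖ := by
  have := norm_sub_norm_le (t • v) (-x)
  rw [norm_smul, norm_neg, sub_neg_eq_add, add_comm] at this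
  exact this

theorem tendsto_norm_add_intCast_smul (hv : v ≠ 0) (x : E) :
    Tendsto (fun n : ℤ => ‖x + (n : ℝ) • v‖) cofinite atTop :=
  tendsto_atTop_mono (abs_mul_norm_sub_norm_le_norm_add_smul x v ·)
    (tendsto_atTop_add_const_right _ _
      (tendsto_abs_intCast_cofinite.atTop_mul_const (norm_pos_iff.2 hv)))

theorem exists_pos_le_norm_add_intCast_smul (hv : v ≠ 0) {x : E}
    (hx : ∀ n : ℤ, x + (n : ℝ) • v ≠ 0) : ∃ δ > 0, ∀ n : ℤ, δ ≤ ‖x + (n : ℝ) • v‖ := by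
  obtain ⟨n₀, hn₀⟩ := (tendsto_norm_add_intCast_smul hv x).exists_forall_le
  exact ⟨_, norm_pos_iff.2 (hx n₀), hn₀⟩

theorem isBigO_inv_norm_add_intCast_smul (hv : v ≠ 0) (x : E) :
    (fun n : ℤ => ‖x + (n : ℝ) • v‖⁻¹) =O[cofinite] fun n : ℤ => (n : ℝ)⁻¹ := by
  have hv' : 0 < ‖v‖ := norm_pos_iff.2 hv
  refine IsBigO.of_bound (2 / ‖v‖) ?_
  filter_upwards [tendsto_abs_intCast_cofinite.eventually_ge_atTop (max (2 * ‖x‖ / ‖v‖) 1)]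
    with n hn
  have hn1 : 0 < |(n : ℝ)| := lt_of_lt_of_le one_pos (le_of_max_le_right hn)
  have hnx : 2 * ‖x‖ ≤ |(n : ℝ)| * ‖v‖ := (div_le_iff₀ hv').1 (le_of_max_le_left hn)
  have hlow : |(n : ℝ)| * ‖v‖ / 2 ≤ ‖x + (n : ℝ) • v‖ := by
    linarith [abs_mul_norm_sub_norm_le_norm_add_smul x v n]
  rw [norm_inv, norm_norm, Real.norm_eq_abs, abs_inv]
  calc ‖x + (n : ℝ) • v‖⁻¹ ≤ (|(n : ℝ)| * ‖v‖ / 2)⁻¹ := inv_anti₀ (by positivity) hlow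
    _ = 2 / ‖v‖ * |(n : ℝ)|⁻¹ := by field_simp

theorem summable_of_isBigO_intCast_inv_sq {F : Type*} [NormedAddCommGroup F] [CompleteSpace F]
    {f : ℤ → F} (hf : f =O[cofinite] fun n : ℤ => (n : ℝ)⁻¹ ^ 2) : Summable f :=
  summable_of_isBigO (by simpa [one_div, inv_pow] using
    Real.summable_one_div_int_pow.2 one_lt_two) hf

theorem summable_inv_norm_add_intCast_smul_sq (hv : v ≠ 0) (x : E) :
    Summable fun n : ℤ => ‖x + (n : ℝ) • v‖⁻¹ ^ 2 :=
  summable_of_isBigO_intCast_inv_sq ((isBigO_inv_norm_add_intCast_smul hv x).pow 2)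

end IntSmul

theorem half_norm_lt_norm_add_of_two_mul_dist_lt {F : Type*} [SeminormedAddCommGroup F]
    {x y a : F} (h : 2 * dist y x < ‖x + a‖) : ‖x + a‖ / 2 < ‖y + a‖ := by
  have := norm_sub_norm_le (x + a) (y + a)
  rw [add_sub_add_right_eq_sub, ← dist_eq_norm, dist_comm] at this
  linarith

section Renormalized

variable {E : Type*} [NormedAddCommGroup E] [InnerProductSpace ℝ E] {v : E}

/-- The `n = 0` term is `‖y‖⁻¹`, since `0⁻¹ = 0`. -/
noncomputable def renormInvNorm (v : E) (n : ℤ) (y : E) : ℝ :=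
  ‖y + (n : ℝ) • v‖⁻¹ - ‖(n : ℝ) • v‖⁻¹

theorem isBigO_renormInvNorm (hv : v ≠ 0) (x : E) :
    (renormInvNorm v · x) =O[cofinite] fun n : ℤ => ‖x + (n : ℝ) • v‖⁻¹ * ‖(n : ℝ) • v‖⁻¹ := by
  refine IsBigO.of_bound ‖x‖ ?_
  filter_upwards [(tendsto_norm_add_intCast_smul hv x).eventually_gt_atTop 0,
    (tendsto_norm_add_intCast_smul hv 0).eventually_gt_atTop 0] with n hxn hn
  rw [zero_add] at hn
  have hdiff : |‖(n : ℝ) • v‖ - ‖x + (n : ℝ) • v‖| ≤ ‖x‖ := by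
    simpa using abs_norm_sub_norm_le ((n : ℝ) • v) (x + (n : ℝ) • v)
  rw [renormInvNorm, inv_sub_inv' hxn.ne' hn.ne', Real.norm_eq_abs, Real.norm_eq_abs,
    abs_mul, abs_mul, abs_inv, abs_inv, abs_norm, abs_norm]
  calc ‖x + (n : ℝ) • v‖⁻¹ * |‖(n : ℝ) • v‖ - ‖x + (n : ℝ) • v‖| * ‖(n : ℝ) • v‖⁻¹
      ≤ ‖x + (n : ℝ) • v‖⁻¹ * ‖x‖ * ‖(n : ℝ) • v‖⁻¹ := by gcongr
    _ = ‖x‖ * |‖x + (n : ℝ) • v‖⁻¹ * ‖(n : ℝ) • v‖⁻¹| := by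
      rw [abs_of_nonneg (by positivity)]; ring

theorem summable_renormInvNorm (hv : v ≠ 0) (x : E) : Summable (renormInvNorm v · x) := by
  refine summable_of_isBigO_intCast_inv_sq ((isBigO_renormInvNorm hv x).trans ?_)
  simpa [sq] using (isBigO_inv_norm_add_intCast_smul hv x).mul
    (isBigO_inv_norm_add_intCast_smul hv 0)

theorem hasFDerivAt_renormInvNorm (n : ℤ) {y : E} (hy : y + (n : ℝ) • v ≠ 0) :
    HasFDerivAt (renormInvNorm v n)
      (innerSL ℝ (-((‖y + (n : ℝ) • v‖ ^ 3)⁻¹ • (y + (n : ℝ) • v)))) y :=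
  ((hasFDerivAt_comp_add_right _).2 (hasFDerivAt_inv_norm hy)).sub_const _

theorem exists_ball_half_norm_lt_norm_add_intCast_smul (hv : v ≠ 0) {x : E}
    (hx : ∀ n : ℤ, x + (n : ℝ) • v ≠ 0) :
    ∃ r > 0, ∀ y ∈ Metric.ball x r, ∀ n : ℤ, ‖x + (n : ℝ) • v‖ / 2 < ‖y + (n : ℝ) • v‖ := by
  obtain ⟨δ, hδ, hle⟩ := exists_pos_le_norm_add_intCast_smul hv hx
  refine ⟨δ / 2, by positivity, fun y hy n => half_norm_lt_norm_add_of_two_mul_dist_lt ?_⟩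
  linarith [Metric.mem_ball.1 hy, hle n]

theorem eventually_forall_add_intCast_smul_ne_zero (hv : v ≠ 0) {x : E}
    (hx : ∀ n : ℤ, x + (n : ℝ) • v ≠ 0) : ∀ᶠ y in 𝓝 x, ∀ n : ℤ, y + (n : ℝ) • v ≠ 0 := by
  obtain ⟨r, hr, hnear⟩ := exists_ball_half_norm_lt_norm_add_intCast_smul hv hx
  filter_upwards [Metric.ball_mem_nhds x hr] with y hy n
  exact norm_pos_iff.1 ((by positivity : 0 ≤ ‖x + (n : ℝ) • v‖ / 2).trans_lt (hnear y hy n))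

theorem hasFDerivAt_tsum_renormInvNorm (hv : v ≠ 0) {x : E}
    (hx : ∀ n : ℤ, x + (n : ℝ) • v ≠ 0) :
    HasFDerivAt (fun y => ∑' n : ℤ, renormInvNorm v n y)
      (∑' n : ℤ, innerSL ℝ (-((‖x + (n : ℝ) • v‖ ^ 3)⁻¹ • (x + (n : ℝ) • v)))) x := by
  obtain ⟨r, hr, hnear⟩ := exists_ball_half_norm_lt_norm_add_intCast_smul hv hx
  have hpos : ∀ y ∈ Metric.ball x r, ∀ n : ℤ, 0 < ‖y + (n : ℝ) • v‖ := fun y hy n =>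
    (by positivity : 0 ≤ ‖x + (n : ℝ) • v‖ / 2).trans_lt (hnear y hy n)
  refine hasFDerivAt_tsum_of_isPreconnected
    ((summable_inv_norm_add_intCast_smul_sq hv x).mul_left 4) Metric.isOpen_ball
    (convex_ball x r).isPreconnected
    (fun n y hy => hasFDerivAt_renormInvNorm n (norm_pos_iff.1 (hpos y hy n)))
    (fun n y hy => ?_) (Metric.mem_ball_self hr) (summable_renormInvNorm hv x)
    (Metric.mem_ball_self hr)
  rw [innerSL_apply_norm, norm_neg, norm_inv_norm_pow_three_smul]
  calc ‖y + (n : ℝ) • v‖⁻¹ ^ 2 ≤ ((‖x + (n : ℝ) • v‖ / 2)⁻¹) ^ 2 := by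
        gcongr
        · have := norm_pos_iff.2 (hx n); positivity
        · exact (hnear y hy n).le
    _ = 4 * ‖x + (n : ℝ) • v‖⁻¹ ^ 2 := by field_simp; norm_num

theorem sum_one_div_mul_norm_sub_mul_sum_renormInvNorm (c : ℝ) (y : E) (s : Finset ℤ) :
    ∑ n ∈ s, 1 / (c * ‖y + (n : ℝ) • v‖) - c⁻¹ * ∑ n ∈ s, renormInvNorm v n y =
      c⁻¹ * ∑ n ∈ s, ‖(n : ℝ) • v‖⁻¹ := by
  rw [Finset.mul_sum, Finset.mul_sum, ← Finset.sum_sub_distrib]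
  refine Finset.sum_congr rfl fun n _ => ?_
  rw [renormInvNorm, one_div, mul_inv]
  ring

theorem eventually_eq_mul_tsum_renormInvNorm_add_const (hv : v ≠ 0) {K : E → ℝ} {c : ℝ}
    {L : ℕ → ℝ} (hK : ∀ x : E, (∀ n : ℤ, x + (n : ℝ) • v ≠ 0) →
      Tendsto (fun N : ℕ =>
        (∑ n ∈ Finset.Icc (-(N : ℤ)) N, 1 / (c * ‖x + (n : ℝ) • v‖)) - L N) atTop (𝓝 (K x)))
    {x₀ : E} (hx₀ : ∀ n : ℤ, x₀ + (n : ℝ) • v ≠ 0) :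
    ∀ᶠ y in 𝓝 x₀, K y = c⁻¹ * ∑' n : ℤ, renormInvNorm v n y +
      (K x₀ - c⁻¹ * ∑' n : ℤ, renormInvNorm v n x₀) := by
  have hD : ∀ z : E, (∀ n : ℤ, z + (n : ℝ) • v ≠ 0) →
      Tendsto (fun N : ℕ => c⁻¹ * ∑ n ∈ Finset.Icc (-(N : ℤ)) N, ‖(n : ℝ) • v‖⁻¹ - L N) atTop
        (𝓝 (K z - c⁻¹ * ∑' n : ℤ, renormInvNorm v n z)) := fun z hz =>
    ((hK z hz).sub (((summable_renormInvNorm hv z).hasSum.comp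
      Finset.tendsto_Icc_neg).const_mul c⁻¹)).congr fun N => by
        simp only [Function.comp_apply]
        rw [sub_right_comm, sum_one_div_mul_norm_sub_mul_sum_renormInvNorm]
  filter_upwards [eventually_forall_add_intCast_smul_ne_zero hv hx₀] with y hy
  linarith [tendsto_nhds_unique (hD y hy) (hD x₀ hx₀)]

end Renormalized

/-- If `K` is the renormalized kernel
`K(x) = lim_{N→∞} [Σ_{n=-N}^N 1/(4π|x+(0,0,n)|) - log N/(2π)]`, then at any point `x₀`
avoiding the lattice of singularities, the gradient of `K` is given by the absolutely
convergent series `∇K(x₀) = Σ_{n∈ℤ} -(x₀+(0,0,n))/(4π|x₀+(0,0,n)|³)`. -/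
theorem stmt_9 (K : EuclideanSpace ℝ (Fin 3) → ℝ)
    (hK : ∀ x : EuclideanSpace ℝ (Fin 3), (∀ n : ℤ, x + (n : ℝ) • e3 ≠ 0) →
      Tendsto (fun N : ℕ =>
        (∑ n ∈ Finset.Icc (-(N : ℤ)) (N : ℤ),
          1 / (4 * Real.pi * ‖x + (n : ℝ) • e3‖)) - Real.log N / (2 * Real.pi))
        atTop (𝓝 (K x)))
    (x₀ : EuclideanSpace ℝ (Fin 3)) (hx₀ : ∀ n : ℤ, x₀ + (n : ℝ) • e3 ≠ 0) :
    Summable (fun n : ℤ =>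
      ‖(4 * Real.pi * ‖x₀ + (n : ℝ) • e3‖ ^ 3)⁻¹ • (x₀ + (n : ℝ) • e3)‖) ∧
    HasGradientAt K
      (∑' n : ℤ, -((4 * Real.pi * ‖x₀ + (n : ℝ) • e3‖ ^ 3)⁻¹ • (x₀ + (n : ℝ) • e3)))
      x₀ := by
  have he3 : e3 ≠ 0 := by simp [e3]
  have hsmul : ∀ w : EuclideanSpace ℝ (Fin 3),
      (4 * Real.pi * ‖w‖ ^ 3)⁻¹ • w = (4 * Real.pi)⁻¹ • (‖w‖ ^ 3)⁻¹ • w := fun w => by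
    rw [mul_inv, mul_smul]
  refine ⟨((summable_inv_norm_add_intCast_smul_sq he3 x₀).mul_left (4 * Real.pi)⁻¹).congr
    fun n => ?_, ?_⟩
  · rw [hsmul, norm_smul, norm_inv_norm_pow_three_smul, Real.norm_of_nonneg (by positivity)]
  rw [hasGradientAt_iff_hasFDerivAt]
  have hS := hasFDerivAt_tsum_renormInvNorm he3 hx₀
  refine (((hS.const_mul _).add_const _).congr_of_eventuallyEq
    (eventually_eq_mul_tsum_renormInvNorm_add_const he3 hK hx₀)).congr_fderiv ?_
  refine (((toDual ℝ _).toContinuousLinearEquiv.map_tsum).trans ?_).symm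
  rw [← tsum_const_smul'']
  congr 1 with n : 1
  rw [hsmul, ← smul_neg, LinearIsometryEquiv.coe_toContinuousLinearEquiv, map_smul]
  rfl
end
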